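/- arXiv:2311.13967 — 6 statements merged into one kernel-verified Lean document; each statement's English description precedes it below -/
import Mathlib

section
/- Let M be a real m×p matrix, A a symmetric p×p real matrix, γ_M > 0, and Γ an m×m real diagonal matrix whose diagonal entries g_j satisfy 0 < g_j < γ_M² for all j. Define D := −Γ + Γ (Γ − γ_M² I_m)⁻¹ Γ. Then D is invertible, and the block matrix [[A − I_p − Mᵀ Γ M, −Mᵀ Γ], [−Γ M, γ_M² I_m − Γ]] is positive semidefinite if and only if the block matrix [[A − I_p, Mᵀ], [M, −D⁻¹]] is positive semidefinite. -/
open Matrix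

lemma diag_inv_aux {k : ℕ} (v : Fin k → ℝ) (hv : ∀ j, v j ≠ 0) :
    (Matrix.diagonal v)⁻¹ = Matrix.diagonal (fun j => (v j)⁻¹) := by
  apply Matrix.inv_eq_right_inv
  rw [Matrix.diagonal_mul_diagonal]
  convert Matrix.diagonal_one with j
  exact mul_inv_cancel₀ (hv j)

/-- Double Schur-complement equivalence. With `Γ = diagonal g`,
`0 < g_j < γ_M²`, and `D := −Γ + Γ (Γ − γ_M² I)⁻¹ Γ`, the matrix `D` is invertible and
`[[A − I − Mᵀ Γ M, −Mᵀ Γ], [−Γ M, γ_M² I − Γ]] ⪰ 0` iff `[[A − I, Mᵀ], [M, −D⁻¹]] ⪰ 0`. -/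
theorem stmt1 (m p : ℕ) (M : Matrix (Fin m) (Fin p) ℝ)
    (A : Matrix (Fin p) (Fin p) ℝ) (hA : A.IsSymm)
    (γM : ℝ) (hγM : 0 < γM)
    (g : Fin m → ℝ) (hg : ∀ j, 0 < g j ∧ g j < γM ^ 2)
    (Γ : Matrix (Fin m) (Fin m) ℝ) (hΓ : Γ = Matrix.diagonal g)
    (D : Matrix (Fin m) (Fin m) ℝ)
    (hD : D = -Γ + Γ * (Γ - γM ^ 2 • 1)⁻¹ * Γ) :
    IsUnit D ∧
    ((Matrix.fromBlocks (A - 1 - Mᵀ * Γ * M) (-(Mᵀ * Γ)) (-(Γ * M)) (γM ^ 2 • 1 - Γ)).PosSemidef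
      ↔ (Matrix.fromBlocks (A - 1) Mᵀ M (-D⁻¹)).PosSemidef) := by
  subst hΓ
  set d : Fin m → ℝ := fun j => -g j + g j * (g j - γM ^ 2)⁻¹ * g j with hd
  have hγ2 : (0:ℝ) < γM ^ 2 := by positivity
  have hgsub : ∀ j, g j - γM ^ 2 ≠ 0 := fun j => sub_ne_zero.mpr (ne_of_lt (hg j).2)
  have hdneg : ∀ j, d j < 0 := by
    intro j
    have h1 := (hg j).1
    have h2 := (hg j).2
    have : d j = γM ^ 2 * g j / (g j - γM ^ 2) := by
      have hne := hgsub j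
      rw [hd]; field_simp; ring
    rw [this]
    apply div_neg_of_pos_of_neg (by positivity) (by linarith)
  have hdne : ∀ j, d j ≠ 0 := fun j => (hdneg j).ne
  have hsub : Matrix.diagonal g - γM ^ 2 • (1 : Matrix (Fin m) (Fin m) ℝ)
      = Matrix.diagonal (fun j => g j - γM ^ 2) := by
    rw [Matrix.smul_one_eq_diagonal, ← Matrix.diagonal_sub]
  have hsub2 : γM ^ 2 • (1 : Matrix (Fin m) (Fin m) ℝ) - Matrix.diagonal g
      = Matrix.diagonal (fun j => γM ^ 2 - g j) := by
    rw [Matrix.smul_one_eq_diagonal, ← Matrix.diagonal_sub]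
  have hDdiag : D = Matrix.diagonal d := by
    rw [hD, hsub, diag_inv_aux _ hgsub, Matrix.diagonal_mul_diagonal,
      Matrix.diagonal_mul_diagonal, Matrix.diagonal_neg, Matrix.diagonal_add]
  have hDunit : IsUnit D := by
    rw [hDdiag, Matrix.isUnit_iff_isUnit_det, Matrix.det_diagonal]
    exact isUnit_iff_ne_zero.mpr (Finset.prod_ne_zero_iff.mpr fun j _ => hdne j)
  refine ⟨hDunit, ?_⟩
  -- inverse of D
  have hDinv : D⁻¹ = Matrix.diagonal (fun j => (d j)⁻¹) := by
    rw [hDdiag, diag_inv_aux _ hdne]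
  have hnegDinv : -D⁻¹ = Matrix.diagonal (fun j => -(d j)⁻¹) := by
    rw [hDinv, ← Matrix.diagonal_neg]
  have hnegDinvinv : (-D⁻¹)⁻¹ = Matrix.diagonal (fun j => -d j) := by
    rw [hnegDinv, diag_inv_aux _ (fun j => neg_ne_zero.mpr (inv_ne_zero (hdne j)))]
    have : (fun j => (-(d j)⁻¹)⁻¹) = fun j => -d j := by
      funext j; rw [inv_neg, inv_inv]
    rw [this]
  -- positive definiteness of the lower-right blocks
  have hPD1 : (γM ^ 2 • (1 : Matrix (Fin m) (Fin m) ℝ) - Matrix.diagonal g).PosDef := by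
    rw [hsub2]
    exact Matrix.posDef_diagonal_iff.mpr fun j => by linarith [(hg j).2]
  have hPD2 : (-D⁻¹).PosDef := by
    rw [hnegDinv]
    exact Matrix.posDef_diagonal_iff.mpr fun j =>
      neg_pos.mpr (inv_neg''.mpr (hdneg j))
  haveI : Invertible (γM ^ 2 • (1 : Matrix (Fin m) (Fin m) ℝ) - Matrix.diagonal g) :=
    hPD1.isUnit.invertible
  haveI : Invertible (-D⁻¹) := hPD2.isUnit.invertible
  -- rewrite the lower-left blocks as conjugate transposes
  have hct1 : -(Matrix.diagonal g * M) = (-(Mᵀ * Matrix.diagonal g))ᴴ := by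
    rw [Matrix.conjTranspose_eq_transpose_of_trivial, Matrix.transpose_neg,
      Matrix.transpose_mul, Matrix.transpose_transpose, Matrix.diagonal_transpose]
  have hct2 : M = (Mᵀ)ᴴ := by
    rw [Matrix.conjTranspose_eq_transpose_of_trivial, Matrix.transpose_transpose]
  rw [hct1, Matrix.PosDef.fromBlocks₂₂ _ _ hPD1]
  have e2 : (Matrix.fromBlocks (A - 1) Mᵀ M (-D⁻¹)) =
      Matrix.fromBlocks (A - 1) Mᵀ (Mᵀ)ᴴ (-D⁻¹) := by rw [← hct2]
  rw [e2, Matrix.PosDef.fromBlocks₂₂ _ _ hPD2]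
  -- show both Schur complements are equal
  have hkey : A - 1 - Mᵀ * Matrix.diagonal g * M -
      -(Mᵀ * Matrix.diagonal g) * (γM ^ 2 • 1 - Matrix.diagonal g)⁻¹ *
        (-(Mᵀ * Matrix.diagonal g))ᴴ
      = A - 1 - Mᵀ * (-D⁻¹)⁻¹ * (Mᵀ)ᴴ := by
    rw [← hct1, ← hct2, hnegDinvinv, hsub2,
      diag_inv_aux _ (fun j => sub_ne_zero.mpr (ne_of_gt (hg j).2))]
    have hdd : Matrix.diagonal g + Matrix.diagonal g *
        (Matrix.diagonal (fun j => (γM ^ 2 - g j)⁻¹) * Matrix.diagonal g)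
        = Matrix.diagonal (fun j => -d j) := by
      rw [Matrix.diagonal_mul_diagonal, Matrix.diagonal_mul_diagonal, Matrix.diagonal_add]
      have : (fun i => g i + g i * ((γM ^ 2 - g i)⁻¹ * g i)) = fun j => -d j := by
        funext j
        have hne := hgsub j
        have hne2 : γM ^ 2 - g j ≠ 0 := sub_ne_zero.mpr (ne_of_gt (hg j).2)
        simp only [hd]
        field_simp
        ring
      rw [this]
    have X : Mᵀ * Matrix.diagonal g * M +
        Mᵀ * Matrix.diagonal g * Matrix.diagonal (fun j => (γM ^ 2 - g j)⁻¹) *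
          (Matrix.diagonal g * M)
        = Mᵀ * Matrix.diagonal (fun j => -d j) * M := by
      conv_rhs => rw [← hdd]
      simp only [Matrix.add_mul, Matrix.mul_add, Matrix.mul_assoc]
    simp only [Matrix.neg_mul, Matrix.mul_neg, neg_neg]
    rw [sub_sub, X]
  rw [hkey]
end

section
/- Let N, m, p be positive integers, M a real m×p matrix, σ_in : Fin m → Fin N and σ_out : Fin p → Fin N surjective functions, and define c_i := max over rows j with σ_in(j) = i of Σ_k |M_{j k}| and r_i := max over columns j with σ_out(j) = i of Σ_k |M_{k j}|; assume c_i > 0 for all i. Let γ_M > 0 and z : Fin N → ℝ be arbitrary, and set α_i := 1 + r_i + z_i² and γ_i² := (1/(1 + r_i + z_i²)) · γ_M²/(c_i γ_M² + 1). Let Γ be the m×m diagonal matrix with Γ_{jj} = α_{σ_in(j)} γ_{σ_in(j)}², A the p×p diagonal matrix with A_{jj} = α_{σ_out(j)}, and D := −Γ + Γ(Γ − γ_M² I_m)⁻¹Γ. Then the symmetric (p+m)×(p+m) block matrix [[A − I_p, Mᵀ], [M, −D⁻¹]] is positive semidefinite. -/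
open Matrix

private theorem aux_ne (q cv γM : ℝ) (hγM : 0 < γM) (hcv : 0 < cv)
    (hq : q = cv * γM ^ 2 + 1) : γM ^ 2 / q - γM ^ 2 ≠ 0 := by
  have hqpos : 0 < q := by nlinarith [mul_pos hcv (pow_pos hγM 2)]
  have hq1 : 1 < q := by nlinarith [mul_pos hcv (pow_pos hγM 2)]
  have : γM ^ 2 / q < γM ^ 2 := div_lt_self (by positivity) hq1
  linarith

private theorem aux_entry (q cv γM : ℝ) (hγM : 0 < γM) (hcv : 0 < cv)
    (hq : q = cv * γM ^ 2 + 1) :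
    -(γM ^ 2 / q) + γM ^ 2 / q * (γM ^ 2 / q - γM ^ 2)⁻¹ * (γM ^ 2 / q) = -cv⁻¹ := by
  have hqpos : 0 < q := by nlinarith [mul_pos hcv (pow_pos hγM 2)]
  have hq0 : q ≠ 0 := ne_of_gt hqpos
  have hγ0 : γM ≠ 0 := ne_of_gt hγM
  have hc0 : cv ≠ 0 := ne_of_gt hcv
  have key : γM ^ 2 / q - γM ^ 2 = -(cv * γM ^ 4) / q := by
    rw [hq]; field_simp; ring
  rw [key, inv_div]
  have hn0 : -(cv * γM ^ 4) ≠ 0 := by simp [hc0, hγ0]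
  field_simp
  rw [hq]; ring

private theorem aux_key {m p : ℕ} (M : Matrix (Fin m) (Fin p) ℝ) (a : Fin p → ℝ)
    (cc : Fin m → ℝ)
    (ha : ∀ k, ∑ j, |M j k| ≤ a k) (hc : ∀ j, ∑ k, |M j k| ≤ cc j)
    (u : Fin p → ℝ) (v : Fin m → ℝ) :
    0 ≤ (∑ k, a k * u k ^ 2) + 2 * (∑ j, ∑ k, v j * M j k * u k) + ∑ j, cc j * v j ^ 2 := by
  have h3 : 0 ≤ ∑ j, ∑ k, (|M j k| * v j ^ 2 + 2 * (v j * M j k * u k) + |M j k| * u k ^ 2) := by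
    refine Finset.sum_nonneg fun j _ => Finset.sum_nonneg fun k _ => ?_
    nlinarith [sq_nonneg (v j + u k), sq_nonneg (v j - u k), abs_nonneg (M j k),
      le_abs_self (M j k), neg_abs_le (M j k)]
  have e1 : ∑ j, ∑ k, (|M j k| * v j ^ 2 + 2 * (v j * M j k * u k) + |M j k| * u k ^ 2)
      = (∑ j, (∑ k, |M j k|) * v j ^ 2) + 2 * (∑ j, ∑ k, v j * M j k * u k)
        + ∑ k, (∑ j, |M j k|) * u k ^ 2 := by
    rw [show (∑ k, (∑ j, |M j k|) * u k ^ 2) = ∑ j, ∑ k, |M j k| * u k ^ 2 by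
      rw [Finset.sum_comm]; simp [Finset.sum_mul]]
    simp only [Finset.sum_mul, Finset.mul_sum, ← Finset.sum_add_distrib]
  have h1 : ∑ j, (∑ k, |M j k|) * v j ^ 2 ≤ ∑ j, cc j * v j ^ 2 :=
    Finset.sum_le_sum fun j _ => mul_le_mul_of_nonneg_right (hc j) (sq_nonneg _)
  have h2 : ∑ k, (∑ j, |M j k|) * u k ^ 2 ≤ ∑ k, a k * u k ^ 2 :=
    Finset.sum_le_sum fun k _ => mul_le_mul_of_nonneg_right (ha k) (sq_nonneg _)
  rw [e1] at h3
  linarith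

private theorem aux_expand {m p : ℕ} (M : Matrix (Fin m) (Fin p) ℝ) (a : Fin p → ℝ)
    (cc : Fin m → ℝ) (x : Fin p ⊕ Fin m → ℝ) :
    star x ⬝ᵥ (Matrix.fromBlocks (diagonal a) Mᵀ M (diagonal cc)) *ᵥ x
      = (∑ k, a k * (x (Sum.inl k)) ^ 2)
        + 2 * (∑ j, ∑ k, x (Sum.inr j) * M j k * x (Sum.inl k))
        + ∑ j, cc j * (x (Sum.inr j)) ^ 2 := by
  simp only [star_trivial, dotProduct, mulVec, dotProduct, Fintype.sum_sum_type,
    fromBlocks_apply₁₁, fromBlocks_apply₁₂, fromBlocks_apply₂₁, fromBlocks_apply₂₂,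
    transpose_apply, diagonal_apply, ite_mul, zero_mul, Finset.sum_ite_eq,
    Finset.mem_univ, if_true, mul_add, Finset.mul_sum, Finset.sum_add_distrib]
  rw [show (∑ i : Fin p, ∑ j : Fin m, x (Sum.inl i) * (M j i * x (Sum.inr j)))
      = ∑ j : Fin m, ∑ i : Fin p, x (Sum.inr j) * M j i * x (Sum.inl i) by
    rw [Finset.sum_comm]
    exact Finset.sum_congr rfl fun _ _ => Finset.sum_congr rfl fun _ _ => by ring]
  simp only [mul_ite, mul_zero, Finset.sum_ite_eq, Finset.mem_univ, if_true,
    Finset.sum_mul, Finset.mul_sum]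
  ring_nf
  have h1 : ∑ x_1 : Fin p, x (Sum.inl x_1) ^ 2 * a x_1 = ∑ x_1, a x_1 * x (Sum.inl x_1) ^ 2 :=
    Finset.sum_congr rfl fun i _ => by ring
  have h2 : ∑ x_1 : Fin m, x (Sum.inr x_1) ^ 2 * cc x_1
      = ∑ x_1, cc x_1 * x (Sum.inr x_1) ^ 2 :=
    Finset.sum_congr rfl fun i _ => by ring
  have h3 : (∑ j : Fin m, ∑ i : Fin p, x (Sum.inr j) * M j i * x (Sum.inl i)) * 2
      = ∑ j : Fin m, ∑ i : Fin p, 2 * x (Sum.inr j) * M j i * x (Sum.inl i) := by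
    rw [Finset.sum_mul]
    exact Finset.sum_congr rfl fun j _ => by
      rw [Finset.sum_mul]; exact Finset.sum_congr rfl fun i _ => by ring
  rw [h1, h2]
  simp only [Finset.sum_mul]

/-- Matrix core of Theorem 1. With the free parametrization
`α i := 1 + r i + z i²`, `γ_i² := (1/(1 + r i + z i²)) · γ_M²/(c i γ_M² + 1)`,
`Γ` the diagonal matrix with entries `α_{σ_in(j)} γ_{σ_in(j)}²`, `A` the diagonal
matrix with entries `α_{σ_out(j)}`, and `D := −Γ + Γ(Γ − γ_M² I)⁻¹Γ`, the block
matrix `[[A − I, Mᵀ], [M, −D⁻¹]]` is positive semidefinite for any real `z`. -/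
theorem stmt6 (N m p : ℕ) (hN : 0 < N) (hm : 0 < m) (hp : 0 < p)
    (M : Matrix (Fin m) (Fin p) ℝ)
    (σin : Fin m → Fin N) (hσin : Function.Surjective σin)
    (σout : Fin p → Fin N) (hσout : Function.Surjective σout)
    (c : Fin N → ℝ)
    (hc : ∀ i, IsGreatest {s : ℝ | ∃ j, σin j = i ∧ s = ∑ k, |M j k|} (c i))
    (hcpos : ∀ i, 0 < c i)
    (r : Fin N → ℝ)
    (hr : ∀ i, IsGreatest {s : ℝ | ∃ j, σout j = i ∧ s = ∑ k, |M k j|} (r i))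
    (γM : ℝ) (hγM : 0 < γM)
    (z : Fin N → ℝ)
    (α : Fin N → ℝ) (hα : ∀ i, α i = 1 + r i + (z i) ^ 2)
    (γsq : Fin N → ℝ)
    (hγsq : ∀ i, γsq i = (1 / (1 + r i + (z i) ^ 2)) * (γM ^ 2 / (c i * γM ^ 2 + 1)))
    (Γ : Matrix (Fin m) (Fin m) ℝ)
    (hΓ : Γ = Matrix.diagonal (fun j => α (σin j) * γsq (σin j)))
    (A : Matrix (Fin p) (Fin p) ℝ)
    (hA : A = Matrix.diagonal (fun j => α (σout j)))
    (D : Matrix (Fin m) (Fin m) ℝ)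
    (hD : D = -Γ + Γ * (Γ - γM ^ 2 • 1)⁻¹ * Γ) :
    (Matrix.fromBlocks (A - 1) Mᵀ M (-D⁻¹)).PosSemidef := by
  have hr0 : ∀ i, 0 ≤ r i := fun i => by
    obtain ⟨j, hj⟩ := hσout i
    exact le_trans (Finset.sum_nonneg fun k _ => abs_nonneg _) ((hr i).2 ⟨j, hj, rfl⟩)
  have hαg : ∀ i, α i * γsq i = γM ^ 2 / (c i * γM ^ 2 + 1) := fun i => by
    have h1 : (1 + r i + z i ^ 2) ≠ 0 := by nlinarith [hr0 i, sq_nonneg (z i)]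
    rw [hα, hγsq]; field_simp
  have hΓd : Γ = diagonal (fun j => γM ^ 2 / (c (σin j) * γM ^ 2 + 1)) := by
    rw [hΓ]; exact congrArg diagonal (funext fun j => hαg _)
  have hsub : Γ - γM ^ 2 • (1 : Matrix (Fin m) (Fin m) ℝ)
      = diagonal (fun j => γM ^ 2 / (c (σin j) * γM ^ 2 + 1) - γM ^ 2) := by
    rw [hΓd, ← diagonal_one, ← diagonal_smul, diagonal_sub]
    exact congrArg diagonal (funext fun j => by simp)
  have hne : ∀ j : Fin m, γM ^ 2 / (c (σin j) * γM ^ 2 + 1) - γM ^ 2 ≠ 0 := fun j =>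
    aux_ne _ _ _ hγM (hcpos _) rfl
  have hinv : (Γ - γM ^ 2 • (1 : Matrix (Fin m) (Fin m) ℝ))⁻¹
      = diagonal (fun j => (γM ^ 2 / (c (σin j) * γM ^ 2 + 1) - γM ^ 2)⁻¹) := by
    apply inv_eq_right_inv
    rw [hsub, diagonal_mul_diagonal, ← diagonal_one]
    exact congrArg diagonal (funext fun j => mul_inv_cancel₀ (hne j))
  have hDd : D = diagonal (fun j => -(c (σin j))⁻¹) := by
    rw [hD, hinv, hΓd, diagonal_mul_diagonal, diagonal_mul_diagonal, diagonal_neg,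
      diagonal_add]
    exact congrArg diagonal (funext fun j => aux_entry _ _ _ hγM (hcpos _) rfl)
  have hDinv : D⁻¹ = diagonal (fun j => -(c (σin j))) := by
    apply inv_eq_right_inv
    rw [hDd, diagonal_mul_diagonal, ← diagonal_one]
    refine congrArg diagonal (funext fun j => ?_)
    have := (hcpos (σin j)).ne'
    field_simp
  have hnegDinv : -D⁻¹ = diagonal (fun j => c (σin j)) := by
    rw [hDinv, diagonal_neg]
    exact congrArg diagonal (funext fun j => neg_neg _)
  have hA1 : A - 1 = diagonal (fun j => α (σout j) - 1) := by
    rw [hA, ← diagonal_one, diagonal_sub]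
  rw [hA1, hnegDinv]
  rw [posSemidef_iff_dotProduct_mulVec]
  constructor
  · refine IsHermitian.fromBlocks (isHermitian_diagonal _) ?_ (isHermitian_diagonal _)
    ext i j
    simp [conjTranspose_apply]
  · intro x
    rw [aux_expand]
    refine aux_key M _ _ (fun k => ?_) (fun j => ?_) _ _
    · have h1 : ∑ j, |M j k| ≤ r (σout k) := (hr (σout k)).2 ⟨k, rfl, rfl⟩
      have h2 := sq_nonneg (z (σout k))
      rw [hα]; linarith
    · exact (hc (σin j)).2 ⟨j, rfl, rfl⟩
end

section
/- Let N, m, p be positive integers, M a real m×p matrix, σ_in : Fin m → Fin N and σ_out : Fin p → Fin N surjective functions, and define c_i := max over rows j with σ_in(j) = i of Σ_k |M_{j k}| and r_i := max over columns j with σ_out(j) = i of Σ_k |M_{k j}|; assume c_i > 0 for all i. Let γ_M > 0 and z : Fin N → ℝ be arbitrary, and set α_i := 1 + r_i + z_i² and γ_i² := (1/(1 + r_i + z_i²)) · γ_M²/(c_i γ_M² + 1). Let Γ be the m×m diagonal matrix with Γ_{jj} = α_{σ_in(j)} γ_{σ_in(j)}² and A the p×p diagonal matrix with A_{jj} = α_{σ_out(j)}.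 Then for all y ∈ ℝ^p and d ∈ ℝ^m: (M y + d)ᵀ Γ (M y + d) + yᵀ y ≤ yᵀ A y + γ_M² dᵀ d. -/
open Matrix

/-- Inequality form of Theorem 1. With the free parametrization
`α i := 1 + r i + z i²`, `γ_i² := (1/(1 + r i + z i²)) · γ_M²/(c i γ_M² + 1)`,
`Γ` the diagonal matrix with entries `α_{σ_in(j)} γ_{σ_in(j)}²` and `A` the diagonal
matrix with entries `α_{σ_out(j)}`, for all `y, d`:
`(M y + d)ᵀ Γ (M y + d) + yᵀ y ≤ yᵀ A y + γ_M² dᵀ d`. -/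
theorem stmt7 (N m p : ℕ) (hN : 0 < N) (hm : 0 < m) (hp : 0 < p)
    (M : Matrix (Fin m) (Fin p) ℝ)
    (σin : Fin m → Fin N) (hσin : Function.Surjective σin)
    (σout : Fin p → Fin N) (hσout : Function.Surjective σout)
    (c : Fin N → ℝ)
    (hc : ∀ i, IsGreatest {s : ℝ | ∃ j, σin j = i ∧ s = ∑ k, |M j k|} (c i))
    (hcpos : ∀ i, 0 < c i)
    (r : Fin N → ℝ)
    (hr : ∀ i, IsGreatest {s : ℝ | ∃ j, σout j = i ∧ s = ∑ k, |M k j|} (r i))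
    (γM : ℝ) (hγM : 0 < γM)
    (z : Fin N → ℝ)
    (α : Fin N → ℝ) (hα : ∀ i, α i = 1 + r i + (z i) ^ 2)
    (γsq : Fin N → ℝ)
    (hγsq : ∀ i, γsq i = (1 / (1 + r i + (z i) ^ 2)) * (γM ^ 2 / (c i * γM ^ 2 + 1)))
    (Γ : Matrix (Fin m) (Fin m) ℝ)
    (hΓ : Γ = Matrix.diagonal (fun j => α (σin j) * γsq (σin j)))
    (A : Matrix (Fin p) (Fin p) ℝ)
    (hA : A = Matrix.diagonal (fun j => α (σout j))) :
    ∀ (y : Fin p → ℝ) (d : Fin m → ℝ),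
      (M *ᵥ y + d) ⬝ᵥ (Γ *ᵥ (M *ᵥ y + d)) + y ⬝ᵥ y
        ≤ y ⬝ᵥ (A *ᵥ y) + γM ^ 2 * (d ⬝ᵥ d) := by
  intro y d
  -- basic positivity facts
  have hr0 : ∀ i, 0 ≤ r i := by
    intro i
    obtain ⟨j, hj, hs⟩ := (hr i).1
    rw [hs]
    positivity
  have hαpos : ∀ i, (0:ℝ) < 1 + r i + (z i) ^ 2 := by
    intro i
    nlinarith [hr0 i, sq_nonneg (z i)]
  have hden : ∀ i, (0:ℝ) < c i * γM ^ 2 + 1 := by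
    intro i
    nlinarith [hcpos i, sq_nonneg γM]
  have hβ : ∀ i, α i * γsq i = γM ^ 2 / (c i * γM ^ 2 + 1) := by
    intro i
    rw [hα, hγsq]
    field_simp
    rw [div_mul_eq_div_div, div_self (ne_of_gt (hαpos i))]
  -- rewrite the matrix expressions as sums
  rw [hΓ, hA]
  have hΓv : ∀ x : Fin m → ℝ,
      x ⬝ᵥ (Matrix.diagonal (fun j => α (σin j) * γsq (σin j)) *ᵥ x)
        = ∑ j, (α (σin j) * γsq (σin j)) * x j ^ 2 := by
    intro x
    simp [dotProduct, Matrix.mulVec_diagonal]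
    congr 1; funext j; ring
  have hAv : y ⬝ᵥ (Matrix.diagonal (fun j => α (σout j)) *ᵥ y)
      = ∑ k, α (σout k) * y k ^ 2 := by
    simp [dotProduct, Matrix.mulVec_diagonal]
    congr 1; funext k; ring
  rw [hΓv, hAv]
  have hyy : y ⬝ᵥ y = ∑ k, y k ^ 2 := by simp [dotProduct]; congr 1; funext k; ring
  have hdd : d ⬝ᵥ d = ∑ j, d j ^ 2 := by simp [dotProduct]; congr 1; funext j; ring
  rw [hyy, hdd]
  -- key per-row inequality
  have key1 : ∀ j, (α (σin j) * γsq (σin j)) * ((M *ᵥ y + d) j) ^ 2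
      ≤ (∑ k, |M j k| * y k ^ 2) + γM ^ 2 * d j ^ 2 := by
    intro j
    set C := c (σin j) with hC
    set a := ∑ k, M j k * y k with ha
    set s := ∑ k, |M j k| with hs
    set Q := ∑ k, |M j k| * y k ^ 2 with hQ
    have hsC : s ≤ C := (hc (σin j)).2 ⟨j, rfl, rfl⟩
    have hCpos : 0 < C := hcpos _
    have hQ0 : 0 ≤ Q := by
      apply Finset.sum_nonneg
      intro k _
      positivity
    -- Cauchy-Schwarz: a² ≤ s * Q
    have hCS : a ^ 2 ≤ s * Q := by
      have habs : |a| ≤ ∑ k, |M j k * y k| := Finset.abs_sum_le_sum_abs _ _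
      have hCS2 : (∑ k, |M j k * y k|) ^ 2 ≤ s * Q := by
        apply Finset.sum_sq_le_sum_mul_sum_of_sq_eq_mul
        · intro k _; positivity
        · intro k _; positivity
        · intro k _
          rw [abs_mul, mul_pow, sq_abs (y k)]
          ring
      calc a ^ 2 = |a| ^ 2 := (sq_abs a).symm
        _ ≤ (∑ k, |M j k * y k|) ^ 2 := by
            apply pow_le_pow_left₀ (abs_nonneg a) habs
        _ ≤ s * Q := hCS2
    have hxj : (M *ᵥ y + d) j = a + d j := by simp [Matrix.mulVec, dotProduct, ha]
    rw [hβ, hxj]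
    rw [div_mul_eq_mul_div, div_le_iff₀ (hden _)]
    have hd2 : 0 ≤ d j ^ 2 := sq_nonneg _
    nlinarith [sq_nonneg (a - C * γM ^ 2 * d j), mul_pos hCpos (pow_pos hγM 2),
      mul_nonneg (mul_nonneg hCpos.le (pow_pos hγM 2).le) hQ0,
      mul_nonneg (sub_nonneg.2 hsC) hQ0,
      mul_nonneg (mul_nonneg (pow_pos hγM 2).le (pow_pos hγM 2).le)
        (mul_nonneg hCpos.le hd2)]
  -- column sums bounded by r
  have key2 : ∑ j, ∑ k, |M j k| * y k ^ 2 ≤ ∑ k, r (σout k) * y k ^ 2 := by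
    rw [Finset.sum_comm]
    apply Finset.sum_le_sum
    intro k _
    rw [← Finset.sum_mul]
    apply mul_le_mul_of_nonneg_right _ (sq_nonneg _)
    exact (hr (σout k)).2 ⟨k, rfl, rfl⟩
  calc (∑ j, (α (σin j) * γsq (σin j)) * ((M *ᵥ y + d) j) ^ 2) + ∑ k, y k ^ 2
      ≤ (∑ j, ((∑ k, |M j k| * y k ^ 2) + γM ^ 2 * d j ^ 2)) + ∑ k, y k ^ 2 := by
        gcongr with j _
        exact key1 j
    _ = (∑ j, ∑ k, |M j k| * y k ^ 2) + γM ^ 2 * (∑ j, d j ^ 2) + ∑ k, y k ^ 2 := by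
        rw [Finset.sum_add_distrib, Finset.mul_sum]
    _ ≤ (∑ k, r (σout k) * y k ^ 2) + γM ^ 2 * (∑ j, d j ^ 2) + ∑ k, y k ^ 2 := by
        gcongr
    _ ≤ (∑ k, α (σout k) * y k ^ 2) + γM ^ 2 * ∑ j, d j ^ 2 := by
        have : ∀ k : Fin p, r (σout k) * y k ^ 2 + y k ^ 2 ≤ α (σout k) * y k ^ 2 := by
          intro k
          rw [hα]
          nlinarith [sq_nonneg (z (σout k)), sq_nonneg (z (σout k) * y k)]
        calc (∑ k, r (σout k) * y k ^ 2) + γM ^ 2 * (∑ j, d j ^ 2) + ∑ k, y k ^ 2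
            = (∑ k, (r (σout k) * y k ^ 2 + y k ^ 2)) + γM ^ 2 * ∑ j, d j ^ 2 := by
              rw [Finset.sum_add_distrib]; ring
          _ ≤ (∑ k, α (σout k) * y k ^ 2) + γM ^ 2 * ∑ j, d j ^ 2 := by
              gcongr with k _
              exact this k
end

section
/- Let N, m, p be positive integers, M a real m×p matrix, σ_in : Fin m → Fin N and σ_out : Fin p → Fin N functions, α : Fin N → ℝ, γ : Fin N → ℝ, γ_M ∈ ℝ, and let Γ be the m×m diagonal matrix with Γ_{jj} = α_{σ_in(j)} γ_{σ_in(j)}² and A the p×p diagonal matrix with A_{jj} = α_{σ_out(j)}. Suppose that for all y ∈ ℝ^p and d ∈ ℝ^m one has (M y + d)ᵀ Γ (M y + d) + yᵀ y ≤ yᵀ A y + γ_M² dᵀ d. Then for all y, ỹ ∈ ℝ^p and d, d̃ ∈ ℝ^m, setting u := M y + d and ũ := M ỹ + d̃, the weighted sum of the local incremental supply rates is dominated by the network supply rate: Σ_{i=1}^N α_i [ γ_i² Σ_{j : σ_in(j)=i} (u_j − ũ_j)² − Σ_{j : σ_out(j)=i} (y_j − ỹ_j)² ] ≤ γ_M²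 Σ_j (d_j − d̃_j)² − Σ_j (y_j − ỹ_j)². -/
/-! The interconnection `u = M y + d` is linear, so the differences of two trajectories again
satisfy it: `u - ũ = M (y - ỹ) + (d - d̃)`. Regrouping the local supply rates by subsystem turns
their `α`-weighted sum into `Δuᵀ Γ Δu - Δyᵀ A Δy`, and the quadratic inequality applied to
`(y - ỹ, d - d̃)` bounds this by the network supply rate. -/

open Matrix Finset

section

variable {ι κ R : Type*} [Fintype ι] [Fintype κ] [DecidableEq κ]

theorem sum_mul_sum_fiber_eq_sum_comp [NonUnitalNonAssocSemiring R] (σ : ι → κ) (c : κ → R)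
    (f : ι → R) : ∑ i, c i * ∑ j with σ j = i, f j = ∑ j, c (σ j) * f j := by
  rw [← sum_fiberwise univ σ]
  refine sum_congr rfl fun i _ ↦ ?_
  rw [mul_sum]
  exact sum_congr rfl fun j hj ↦ by rw [(mem_filter.1 hj).2]

theorem dotProduct_self_eq_sum_sq [Semiring R] (v : ι → R) : v ⬝ᵥ v = ∑ j, v j ^ 2 := by
  simp only [dotProduct, sq]

theorem dotProduct_diagonal_mulVec_self [CommSemiring R] [DecidableEq ι] (w v : ι → R) :
    v ⬝ᵥ (diagonal w *ᵥ v) = ∑ j, w j * v j ^ 2 := by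
  simp only [dotProduct, mulVec_diagonal]
  exact sum_congr rfl fun j _ ↦ by ring

theorem sum_weighted_supply_rate_eq {ο : Type*} [Fintype ο] [DecidableEq ι] [DecidableEq ο]
    [CommRing R] (σin : ι → κ) (σout : ο → κ) (α γ : κ → R) (u : ι → R) (e : ο → R) :
    ∑ i, α i * (γ i ^ 2 * ∑ j with σin j = i, u j ^ 2 - ∑ j with σout j = i, e j ^ 2) =
      u ⬝ᵥ (diagonal (fun j ↦ α (σin j) * γ (σin j) ^ 2) *ᵥ u) -
        e ⬝ᵥ (diagonal (fun j ↦ α (σout j)) *ᵥ e) := by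
  simp only [mul_sub, sum_sub_distrib, ← mul_assoc, dotProduct_diagonal_mulVec_self,
    sum_mul_sum_fiber_eq_sum_comp σin (fun i ↦ α i * γ i ^ 2),
    sum_mul_sum_fiber_eq_sum_comp σout α]

end

theorem stmt8_general (N m p : ℕ)
    (M : Matrix (Fin m) (Fin p) ℝ)
    (σin : Fin m → Fin N) (σout : Fin p → Fin N)
    (α : Fin N → ℝ) (γ : Fin N → ℝ) (γM : ℝ)
    (Γ : Matrix (Fin m) (Fin m) ℝ)
    (hΓ : Γ = Matrix.diagonal (fun j => α (σin j) * (γ (σin j)) ^ 2))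
    (A : Matrix (Fin p) (Fin p) ℝ)
    (hA : A = Matrix.diagonal (fun j => α (σout j)))
    (hquad : ∀ (y : Fin p → ℝ) (d : Fin m → ℝ),
      (M *ᵥ y + d) ⬝ᵥ (Γ *ᵥ (M *ᵥ y + d)) + y ⬝ᵥ y
        ≤ y ⬝ᵥ (A *ᵥ y) + γM ^ 2 * (d ⬝ᵥ d)) :
    ∀ (y y' : Fin p → ℝ) (d d' : Fin m → ℝ),
      ∑ i : Fin N, α i *
        ((γ i) ^ 2 *
            (∑ j ∈ Finset.univ.filter (fun j => σin j = i),
              ((M *ᵥ y + d) j - (M *ᵥ y' + d') j) ^ 2)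
          - ∑ j ∈ Finset.univ.filter (fun j => σout j = i), (y j - y' j) ^ 2)
        ≤ γM ^ 2 * (∑ j, (d j - d' j) ^ 2) - ∑ j, (y j - y' j) ^ 2 := by
  intro y y' d d'
  have hu : M *ᵥ (y - y') + (d - d') = (M *ᵥ y + d) - (M *ᵥ y' + d') := by
    rw [mulVec_sub]; abel
  have hdiff := hquad (y - y') (d - d')
  rw [hu, hΓ, hA, dotProduct_self_eq_sum_sq, dotProduct_self_eq_sum_sq] at hdiff
  have hsum := sum_weighted_supply_rate_eq σin σout α γ (M *ᵥ y + d - (M *ᵥ y' + d')) (y - y')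
  simp only [Pi.sub_apply] at hsum hdiff
  rw [hsum]
  linarith

/-- Supply-rate domination. If the quadratic inequality
`(M y + d)ᵀ Γ (M y + d) + yᵀ y ≤ yᵀ A y + γ_M² dᵀ d` holds (with `Γ`, `A` the diagonal
matrices built from the weights `α` and local gains `γ`), then for any two
interconnected input/output pairs, the weighted sum of local incremental supply
rates is dominated by the network supply rate. -/
theorem stmt8 (N m p : ℕ) (hN : 0 < N) (hm : 0 < m) (hp : 0 < p)
    (M : Matrix (Fin m) (Fin p) ℝ)
    (σin : Fin m → Fin N) (σout : Fin p → Fin N)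
    (α : Fin N → ℝ) (γ : Fin N → ℝ) (γM : ℝ)
    (Γ : Matrix (Fin m) (Fin m) ℝ)
    (hΓ : Γ = Matrix.diagonal (fun j => α (σin j) * (γ (σin j)) ^ 2))
    (A : Matrix (Fin p) (Fin p) ℝ)
    (hA : A = Matrix.diagonal (fun j => α (σout j)))
    (hquad : ∀ (y : Fin p → ℝ) (d : Fin m → ℝ),
      (M *ᵥ y + d) ⬝ᵥ (Γ *ᵥ (M *ᵥ y + d)) + y ⬝ᵥ y
        ≤ y ⬝ᵥ (A *ᵥ y) + γM ^ 2 * (d ⬝ᵥ d)) :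
    ∀ (y y' : Fin p → ℝ) (d d' : Fin m → ℝ),
      ∑ i : Fin N, α i *
        ((γ i) ^ 2 *
            (∑ j ∈ Finset.univ.filter (fun j => σin j = i),
              ((M *ᵥ y + d) j - (M *ᵥ y' + d') j) ^ 2)
          - ∑ j ∈ Finset.univ.filter (fun j => σout j = i), (y j - y' j) ^ 2)
        ≤ γM ^ 2 * (∑ j, (d j - d' j) ^ 2) - ∑ j, (y j - y' j) ^ 2 :=
  stmt8_general N m p M σin σout α γ γM Γ hΓ A hA hquad
end

section
/- Consider N discrete-time subsystems: for each i ∈ Fin N let X_i be a (finite-dimensional Euclidean) state space, let U_i := {j ∈ Fin m : σ_in(j) = i} → ℝ and Y_i := {j ∈ Fin p : σ_out(j) = i} → ℝ be the subsystem input and output channel spaces, and let f_i : X_i × U_i → X_i, h_i : X_i × U_i → Y_i, and V_i : X_i × X_i → ℝ be functions such that for all states x, x̃ ∈ X_i and inputs v, ṽ ∈ U_i: V_i(f_i(x,v), f_i(x̃,ṽ)) − V_i(x, x̃) ≤ γ_i² ‖v − ṽ‖² − ‖h_i(x,v) − h_i(x̃,ṽ)‖². Let α : Fin N → ℝ with α_i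 > 0, let M be a real m×p matrix, and suppose that for all y ∈ ℝ^p, d ∈ ℝ^m: (M y + d)ᵀ Γ (M y + d) + yᵀ y ≤ yᵀ A y + γ_M² dᵀ d, where Γ is the m×m diagonal matrix with Γ_{jj} = α_{σ_in(j)} γ_{σ_in(j)}² and A is the p×p diagonal matrix with A_{jj} = α_{σ_out(j)}. Let (x, y, d) and (x̃, ỹ, d̃) be two trajectories of the interconnected system: for all t ∈ ℕ, with u(t) := M y(t) + d(t) (resp. ũ(t) := M ỹ(t) + d̃(t)), the restriction of y(t) to subsystem i's output channels equals h_i(x_i(t), u(t)|_i) and x_i(t+1) = f_i(x_i(t), u(t)|_i) (resp. for the tilded trajectory). Then the weighted storage V(x, x̃) := Σ_i α_i V_i(x_i, x̃_i) satisfies, for every t ∈ ℕ, the incremental dissipation inequality V(x(t+1), x̃(t+1)) − V(x(t), x̃(t)) ≤ γ_M² ‖d(t) − d̃(t)‖² − ‖y(t) − ỹ(t)‖². -/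
open Matrix

lemma euc_norm_sq {ι : Type*} [Fintype ι] (v : EuclideanSpace ℝ ι) :
    ‖v‖ ^ 2 = ∑ i, v i ^ 2 := by
  rw [EuclideanSpace.norm_eq, Real.sq_sqrt (by positivity)]
  simp [sq_abs]

/-- Proposition 1: `N` incrementally dissipative subsystems with
storages `V i` and supply rates `γ_i²‖v − ṽ‖² − ‖h_i(x,v) − h_i(x̃,ṽ)‖²`, interconnected
through `u = M y + d` (performance output `e = y`), and such that the quadratic
performance condition holds for weights `α i > 0`; then the weighted storage
`Σ α_i V_i` satisfies the incremental dissipation inequality with supply rate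
`γ_M²‖d − d̃‖² − ‖y − ỹ‖²` along any two trajectories. -/
theorem stmt9 (N m p : ℕ) (hN : 0 < N) (hm : 0 < m) (hp : 0 < p)
    (σin : Fin m → Fin N) (σout : Fin p → Fin N)
    (X : Fin N → Type)
    (f : ∀ i, X i → EuclideanSpace ℝ {j : Fin m // σin j = i} → X i)
    (h : ∀ i, X i → EuclideanSpace ℝ {j : Fin m // σin j = i} →
      EuclideanSpace ℝ {j : Fin p // σout j = i})
    (V : ∀ i, X i → X i → ℝ)
    (γ : Fin N → ℝ)
    (hdiss : ∀ (i : Fin N) (x x' : X i)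
      (v v' : EuclideanSpace ℝ {j : Fin m // σin j = i}),
      V i (f i x v) (f i x' v') - V i x x'
        ≤ (γ i) ^ 2 * ‖v - v'‖ ^ 2 - ‖h i x v - h i x' v'‖ ^ 2)
    (α : Fin N → ℝ) (hα : ∀ i, 0 < α i)
    (M : Matrix (Fin m) (Fin p) ℝ) (γM : ℝ)
    (Γ : Matrix (Fin m) (Fin m) ℝ)
    (hΓ : Γ = Matrix.diagonal (fun j => α (σin j) * (γ (σin j)) ^ 2))
    (A : Matrix (Fin p) (Fin p) ℝ)
    (hA : A = Matrix.diagonal (fun j => α (σout j)))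
    (hquad : ∀ (y : Fin p → ℝ) (d : Fin m → ℝ),
      (M *ᵥ y + d) ⬝ᵥ (Γ *ᵥ (M *ᵥ y + d)) + y ⬝ᵥ y
        ≤ y ⬝ᵥ (A *ᵥ y) + γM ^ 2 * (d ⬝ᵥ d))
    -- two trajectories of the interconnected system
    (x x' : ℕ → ∀ i, X i) (y y' : ℕ → Fin p → ℝ) (d d' : ℕ → Fin m → ℝ)
    (hy : ∀ (t : ℕ) (i : Fin N) (j : {j : Fin p // σout j = i}),
      y t j.val = h i (x t i) (WithLp.toLp 2 (fun k : {j : Fin m // σin j = i} => (M *ᵥ y t + d t) k.val)) j)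
    (hy' : ∀ (t : ℕ) (i : Fin N) (j : {j : Fin p // σout j = i}),
      y' t j.val = h i (x' t i) (WithLp.toLp 2 (fun k : {j : Fin m // σin j = i} => (M *ᵥ y' t + d' t) k.val)) j)
    (hx : ∀ (t : ℕ) (i : Fin N),
      x (t + 1) i = f i (x t i) (WithLp.toLp 2 (fun k : {j : Fin m // σin j = i} => (M *ᵥ y t + d t) k.val)))
    (hx' : ∀ (t : ℕ) (i : Fin N),
      x' (t + 1) i = f i (x' t i) (WithLp.toLp 2 (fun k : {j : Fin m // σin j = i} => (M *ᵥ y' t + d' t) k.val))) :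
    ∀ t : ℕ,
      (∑ i, α i * V i (x (t + 1) i) (x' (t + 1) i))
        - (∑ i, α i * V i (x t i) (x' t i))
      ≤ γM ^ 2 * (∑ j, (d t j - d' t j) ^ 2) - ∑ j, (y t j - y' t j) ^ 2 := by
  intro t
  set u : Fin m → ℝ := M *ᵥ y t + d t with hu
  set u' : Fin m → ℝ := M *ᵥ y' t + d' t with hu'
  have key : ∀ i, α i * V i (x (t+1) i) (x' (t+1) i) - α i * V i (x t i) (x' t i)
      ≤ (∑ k : {j : Fin m // σin j = i}, α (σin k.val) * γ (σin k.val) ^ 2 * (u k.val - u' k.val) ^ 2)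
        - ∑ j : {j : Fin p // σout j = i}, α (σout j.val) * (y t j.val - y' t j.val) ^ 2 := by
    intro i
    have hd := hdiss i (x t i) (x' t i) (WithLp.toLp 2 (fun k => u k.val)) (WithLp.toLp 2 (fun k => u' k.val))
    rw [euc_norm_sq, euc_norm_sq] at hd
    simp only [PiLp.sub_apply, PiLp.toLp_apply] at hd
    have hyy : ∀ j : {j : Fin p // σout j = i},
        h i (x t i) (WithLp.toLp 2 (fun k => u k.val)) j = y t j.val := by
      intro j
      have hyj := hy t i j
      rw [← hu] at hyj
      exact hyj.symm
    have hyy' : ∀ j : {j : Fin p // σout j = i},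
        h i (x' t i) (WithLp.toLp 2 (fun k => u' k.val)) j = y' t j.val := by
      intro j
      have hyj := hy' t i j
      rw [← hu'] at hyj
      exact hyj.symm
    simp only [hyy, hyy'] at hd
    rw [hx, hx', ← hu, ← hu']
    have hsum1 : (∑ k : {j : Fin m // σin j = i},
        α (σin k.val) * γ (σin k.val) ^ 2 * (u k.val - u' k.val) ^ 2)
        = α i * (γ i ^ 2 * ∑ k : {j : Fin m // σin j = i}, (u k.val - u' k.val) ^ 2) := by
      have hterm : ∀ k : {j : Fin m // σin j = i},
          α (σin k.val) * γ (σin k.val) ^ 2 * (u k.val - u' k.val) ^ 2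
            = α i * (γ i ^ 2 * (u k.val - u' k.val) ^ 2) := fun k => by rw [k.2]; ring
      simp_rw [hterm, ← Finset.mul_sum]
    have hsum2 : (∑ j : {j : Fin p // σout j = i},
        α (σout j.val) * (y t j.val - y' t j.val) ^ 2)
        = α i * ∑ j : {j : Fin p // σout j = i}, (y t j.val - y' t j.val) ^ 2 := by
      have hterm : ∀ j : {j : Fin p // σout j = i},
          α (σout j.val) * (y t j.val - y' t j.val) ^ 2
            = α i * (y t j.val - y' t j.val) ^ 2 := fun j => by rw [j.2]
      simp_rw [hterm, ← Finset.mul_sum]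
    rw [hsum1, hsum2, ← mul_sub, ← mul_sub]
    exact mul_le_mul_of_nonneg_left hd (hα i).le
  have step1 : (∑ i, α i * V i (x (t + 1) i) (x' (t + 1) i))
      - (∑ i, α i * V i (x t i) (x' t i))
      ≤ (∑ k, α (σin k) * γ (σin k) ^ 2 * (u k - u' k) ^ 2)
        - ∑ j, α (σout j) * (y t j - y' t j) ^ 2 := by
    rw [← Finset.sum_sub_distrib,
      ← Fintype.sum_fiberwise σin (fun k => α (σin k) * γ (σin k) ^ 2 * (u k - u' k) ^ 2),
      ← Fintype.sum_fiberwise σout (fun j => α (σout j) * (y t j - y' t j) ^ 2),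
      ← Finset.sum_sub_distrib]
    exact Finset.sum_le_sum fun i _ => key i
  have hq := hquad (y t - y' t) (d t - d' t)
  have hud : M *ᵥ (y t - y' t) + (d t - d' t) = u - u' := by
    rw [hu, hu', Matrix.mulVec_sub]; abel
  rw [hud, hΓ, hA] at hq
  have e1 : (u - u') ⬝ᵥ (Matrix.diagonal (fun j => α (σin j) * γ (σin j) ^ 2) *ᵥ (u - u'))
      = ∑ k, α (σin k) * γ (σin k) ^ 2 * (u k - u' k) ^ 2 := by
    simp only [dotProduct, Matrix.mulVec_diagonal, Pi.sub_apply]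
    exact Finset.sum_congr rfl fun k _ => by ring
  have e2 : (y t - y' t) ⬝ᵥ (Matrix.diagonal (fun j => α (σout j)) *ᵥ (y t - y' t))
      = ∑ j, α (σout j) * (y t j - y' t j) ^ 2 := by
    simp only [dotProduct, Matrix.mulVec_diagonal, Pi.sub_apply]
    exact Finset.sum_congr rfl fun j _ => by ring
  have e3 : (y t - y' t) ⬝ᵥ (y t - y' t) = ∑ j, (y t j - y' t j) ^ 2 := by
    simp only [dotProduct, Pi.sub_apply, sq]
  have e4 : (d t - d' t) ⬝ᵥ (d t - d' t) = ∑ j, (d t j - d' t j) ^ 2 := by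
    simp only [dotProduct, Pi.sub_apply, sq]
  rw [e1, e2, e3, e4] at hq
  linarith [step1, hq]
end

section
/- Consider N discrete-time subsystems interconnected by a real m×p matrix M through u = M y + d with performance output e = y, where σ_in : Fin m → Fin N and σ_out : Fin p → Fin N are surjective assignments of input and output channels to subsystems; define c_i := max over rows j with σ_in(j) = i of Σ_k |M_{j k}| and r_i := max over columns j with σ_out(j) = i of Σ_k |M_{k j}|, and assume c_i > 0 for all i. Let γ_M > 0 and z : Fin N → ℝ be arbitrary, and set α_i := 1 + r_i + z_i² and γ_i² := (1/(1 + r_i + z_i²)) · γ_M²/(c_i γ_M² + 1). Suppose each subsystem i, with state space X_i, dynamics f_i : X_i × U_i → X_i, output map h_i : X_i × U_i → Y_i (U_i, Y_i the subsystem input and output channel spaces), and storage V_i : X_i × X_i → ℝ, satisfies for all x, x̃, v, ṽ: V_i(f_i(x,v), f_i(x̃,ṽ)) − V_i(x, x̃) ≤ γ_i² ‖v − ṽ‖² − ‖h_i(x,v) − h_i(x̃,ṽ)‖². Then for any two trajectories (x, y, d) and (x̃, ỹ, d̃) of the interconnected system (i.e., with u(t) = M y(t) + d(t), y(t)|_i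 = h_i(x_i(t), u(t)|_i), x_i(t+1) = f_i(x_i(t), u(t)|_i), and similarly for the tilded trajectory), the storage V(x, x̃) := Σ_i α_i V_i(x_i, x̃_i) satisfies, for every t ∈ ℕ: V(x(t+1), x̃(t+1)) − V(x(t), x̃(t)) ≤ γ_M² ‖d(t) − d̃(t)‖² − ‖y(t) − ỹ(t)‖². -/
set_option maxHeartbeats 1000000

open Matrix

lemma norm_sq_euclid {ι : Type*} [Fintype ι] (v w : EuclideanSpace ℝ ι) :
    ‖v - w‖ ^ 2 = ∑ i, (v i - w i) ^ 2 := by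
  rw [EuclideanSpace.norm_eq, Real.sq_sqrt (by positivity)]
  simp [Real.norm_eq_abs, sq_abs]

lemma young_aux (A B s : ℝ) : s * (A + B) ^ 2 ≤ (s + 1) * A ^ 2 + s * (s + 1) * B ^ 2 := by
  nlinarith [sq_nonneg (A - s * B)]

/-- Theorem 1 in full: with the free parametrization
`α i := 1 + r i + z i²` and `γ_i² := (1/(1 + r i + z i²)) · γ_M²/(c i γ_M² + 1)`
(where `c i > 0` and `r i` are the maximal absolute row/column sums of `M` over the
channels of subsystem `i`), if each subsystem is incrementally dissipative with
storage `V i` and supply rate `γ_i²‖v − ṽ‖² − ‖h_i(x,v) − h_i(x̃,ṽ)‖²`, then along any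
two trajectories of the interconnection `u = M y + d`, `e = y`, the weighted storage
`Σ α_i V_i` satisfies the dissipation inequality with supply rate
`γ_M²‖d − d̃‖² − ‖y − ỹ‖²`. -/
theorem stmt10 (N m p : ℕ) (hN : 0 < N) (hm : 0 < m) (hp : 0 < p)
    (M : Matrix (Fin m) (Fin p) ℝ)
    (σin : Fin m → Fin N) (hσin : Function.Surjective σin)
    (σout : Fin p → Fin N) (hσout : Function.Surjective σout)
    (c : Fin N → ℝ)
    (hc : ∀ i, IsGreatest {s : ℝ | ∃ j, σin j = i ∧ s = ∑ k, |M j k|} (c i))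
    (hcpos : ∀ i, 0 < c i)
    (r : Fin N → ℝ)
    (hr : ∀ i, IsGreatest {s : ℝ | ∃ j, σout j = i ∧ s = ∑ k, |M k j|} (r i))
    (γM : ℝ) (hγM : 0 < γM)
    (z : Fin N → ℝ)
    (α : Fin N → ℝ) (hα : ∀ i, α i = 1 + r i + (z i) ^ 2)
    (γsq : Fin N → ℝ)
    (hγsq : ∀ i, γsq i = (1 / (1 + r i + (z i) ^ 2)) * (γM ^ 2 / (c i * γM ^ 2 + 1)))
    (X : Fin N → Type)
    (f : ∀ i, X i → EuclideanSpace ℝ {j : Fin m // σin j = i} → X i)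
    (h : ∀ i, X i → EuclideanSpace ℝ {j : Fin m // σin j = i} →
      EuclideanSpace ℝ {j : Fin p // σout j = i})
    (V : ∀ i, X i → X i → ℝ)
    (hdiss : ∀ (i : Fin N) (x x' : X i)
      (v v' : EuclideanSpace ℝ {j : Fin m // σin j = i}),
      V i (f i x v) (f i x' v') - V i x x'
        ≤ γsq i * ‖v - v'‖ ^ 2 - ‖h i x v - h i x' v'‖ ^ 2)
    -- two trajectories of the interconnected system
    (x x' : ℕ → ∀ i, X i) (y y' : ℕ → Fin p → ℝ) (d d' : ℕ → Fin m → ℝ)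
    (hy : ∀ (t : ℕ) (i : Fin N) (j : {j : Fin p // σout j = i}),
      y t j.val = h i (x t i) (WithLp.toLp 2 (fun k : {j : Fin m // σin j = i} => (M *ᵥ y t + d t) k.val)) j)
    (hy' : ∀ (t : ℕ) (i : Fin N) (j : {j : Fin p // σout j = i}),
      y' t j.val = h i (x' t i) (WithLp.toLp 2 (fun k : {j : Fin m // σin j = i} => (M *ᵥ y' t + d' t) k.val)) j)
    (hx : ∀ (t : ℕ) (i : Fin N),
      x (t + 1) i = f i (x t i) (WithLp.toLp 2 (fun k : {j : Fin m // σin j = i} => (M *ᵥ y t + d t) k.val)))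
    (hx' : ∀ (t : ℕ) (i : Fin N),
      x' (t + 1) i = f i (x' t i) (WithLp.toLp 2 (fun k : {j : Fin m // σin j = i} => (M *ᵥ y' t + d' t) k.val))) :
    ∀ t : ℕ,
      (∑ i, α i * V i (x (t + 1) i) (x' (t + 1) i))
        - (∑ i, α i * V i (x t i) (x' t i))
      ≤ γM ^ 2 * (∑ j, (d t j - d' t j) ^ 2) - ∑ j, (y t j - y' t j) ^ 2 := by
  intro t
  have hrnn : ∀ i, 0 ≤ r i := by
    intro i
    obtain ⟨j, -, hs⟩ := (hr i).1
    rw [hs]; positivity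
  have hαpos : ∀ i, 0 < α i := by
    intro i; rw [hα i]; nlinarith [hrnn i, sq_nonneg (z i)]
  have hαγ : ∀ i, α i * γsq i = γM ^ 2 / (c i * γM ^ 2 + 1) := by
    intro i
    have hne : (1 : ℝ) + r i + z i ^ 2 ≠ 0 := by nlinarith [hrnn i, sq_nonneg (z i)]
    rw [hγsq i, hα i]
    field_simp
  -- per-subsystem dissipation, weighted by α
  have key : ∀ i, α i * V i (x (t+1) i) (x' (t+1) i) - α i * V i (x t i) (x' t i)
      ≤ (γM ^ 2 / (c i * γM ^ 2 + 1))
          * (∑ k : {j : Fin m // σin j = i},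
              ((M *ᵥ y t + d t) k.val - (M *ᵥ y' t + d' t) k.val) ^ 2)
        - α i * (∑ j : {j : Fin p // σout j = i}, (y t j.val - y' t j.val) ^ 2) := by
    intro i
    have hd := hdiss i (x t i) (x' t i)
      (WithLp.toLp 2 (fun k : {j : Fin m // σin j = i} => (M *ᵥ y t + d t) k.val)) (WithLp.toLp 2 (fun k : {j : Fin m // σin j = i} => (M *ᵥ y' t + d' t) k.val))
    rw [norm_sq_euclid, norm_sq_euclid] at hd
    have hout : ∑ j : {j : Fin p // σout j = i},
        ((h i (x t i) (WithLp.toLp 2 (fun k : {j : Fin m // σin j = i} => (M *ᵥ y t + d t) k.val))) j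
          - (h i (x' t i) (WithLp.toLp 2 (fun k : {j : Fin m // σin j = i} => (M *ᵥ y' t + d' t) k.val))) j) ^ 2
        = ∑ j : {j : Fin p // σout j = i}, (y t j.val - y' t j.val) ^ 2 := by
      refine Finset.sum_congr rfl fun j _ => ?_
      rw [← hy t i j, ← hy' t i j]
    rw [hout] at hd
    rw [← hx t i, ← hx' t i] at hd
    have hmul := mul_le_mul_of_nonneg_left hd (hαpos i).le
    calc α i * V i (x (t+1) i) (x' (t+1) i) - α i * V i (x t i) (x' t i)
        = α i * (V i (x (t+1) i) (x' (t+1) i) - V i (x t i) (x' t i)) := by ring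
      _ ≤ α i * (γsq i
            * (∑ k : {j : Fin m // σin j = i},
                ((fun k : {j : Fin m // σin j = i} => (M *ᵥ y t + d t) k.val) k
                  - (fun k : {j : Fin m // σin j = i} => (M *ᵥ y' t + d' t) k.val) k) ^ 2)
            - ∑ j : {j : Fin p // σout j = i}, (y t j.val - y' t j.val) ^ 2) := hmul
      _ = (α i * γsq i)
            * (∑ k : {j : Fin m // σin j = i},
                ((M *ᵥ y t + d t) k.val - (M *ᵥ y' t + d' t) k.val) ^ 2)
            - α i * (∑ j : {j : Fin p // σout j = i}, (y t j.val - y' t j.val) ^ 2) := by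
          ring
      _ = _ := by rw [hαγ i]
  -- sum the key inequality
  have hsum : (∑ i, α i * V i (x (t+1) i) (x' (t+1) i))
      - (∑ i, α i * V i (x t i) (x' t i))
      ≤ (∑ j : Fin m, γM ^ 2 / (c (σin j) * γM ^ 2 + 1)
            * ((M *ᵥ y t + d t) j - (M *ᵥ y' t + d' t) j) ^ 2)
        - ∑ k : Fin p, α (σout k) * (y t k - y' t k) ^ 2 := by
    have h1 : ∑ i, (γM ^ 2 / (c i * γM ^ 2 + 1))
          * (∑ k : {j : Fin m // σin j = i},
              ((M *ᵥ y t + d t) k.val - (M *ᵥ y' t + d' t) k.val) ^ 2)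
        = ∑ j : Fin m, γM ^ 2 / (c (σin j) * γM ^ 2 + 1)
            * ((M *ᵥ y t + d t) j - (M *ᵥ y' t + d' t) j) ^ 2 := by
      rw [← Fintype.sum_fiberwise σin (fun j => γM ^ 2 / (c (σin j) * γM ^ 2 + 1)
            * ((M *ᵥ y t + d t) j - (M *ᵥ y' t + d' t) j) ^ 2)]
      refine Finset.sum_congr rfl fun i _ => ?_
      rw [Finset.mul_sum]
      exact Finset.sum_congr rfl fun k _ => by rw [k.2]
    have h2 : ∑ i, α i * (∑ j : {j : Fin p // σout j = i}, (y t j.val - y' t j.val) ^ 2)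
        = ∑ k : Fin p, α (σout k) * (y t k - y' t k) ^ 2 := by
      rw [← Fintype.sum_fiberwise σout (fun k => α (σout k) * (y t k - y' t k) ^ 2)]
      refine Finset.sum_congr rfl fun i _ => ?_
      rw [Finset.mul_sum]
      exact Finset.sum_congr rfl fun k _ => by rw [k.2]
    calc (∑ i, α i * V i (x (t+1) i) (x' (t+1) i))
          - (∑ i, α i * V i (x t i) (x' t i))
        = ∑ i, (α i * V i (x (t+1) i) (x' (t+1) i) - α i * V i (x t i) (x' t i)) := by
          rw [Finset.sum_sub_distrib]
      _ ≤ ∑ i, ((γM ^ 2 / (c i * γM ^ 2 + 1))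
            * (∑ k : {j : Fin m // σin j = i},
                ((M *ᵥ y t + d t) k.val - (M *ᵥ y' t + d' t) k.val) ^ 2)
            - α i * (∑ j : {j : Fin p // σout j = i}, (y t j.val - y' t j.val) ^ 2)) :=
          Finset.sum_le_sum fun i _ => key i
      _ = _ := by rw [Finset.sum_sub_distrib, h1, h2]
  -- rowwise bound
  have hrow : ∀ j : Fin m, γM ^ 2 / (c (σin j) * γM ^ 2 + 1)
        * ((M *ᵥ y t + d t) j - (M *ᵥ y' t + d' t) j) ^ 2
      ≤ (∑ k, |M j k| * (y t k - y' t k) ^ 2) + γM ^ 2 * (d t j - d' t j) ^ 2 := by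
    intro j
    set i := σin j with hi
    set A := ∑ k, M j k * (y t k - y' t k) with hA
    set B := d t j - d' t j with hB
    set Q := ∑ k, |M j k| * (y t k - y' t k) ^ 2 with hQ
    set S := ∑ k, |M j k| with hS
    have hSc : S ≤ c i := (hc i).2 ⟨j, rfl, rfl⟩
    have hQnn : 0 ≤ Q := Finset.sum_nonneg fun k _ => by positivity
    have hAB : (M *ᵥ y t + d t) j - (M *ᵥ y' t + d' t) j = A + B := by
      simp only [Pi.add_apply, Matrix.mulVec, dotProduct, hA, hB]
      rw [show (∑ k, M j k * (y t k - y' t k))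
          = ∑ k, (M j k * y t k - M j k * y' t k) from
        Finset.sum_congr rfl fun k _ => by ring, Finset.sum_sub_distrib]
      ring
    rw [hAB]
    -- Cauchy–Schwarz: A² ≤ S * Q
    have hA2 : A ^ 2 ≤ S * Q := by
      have habs : |A| ≤ ∑ k, Real.sqrt |M j k| * (Real.sqrt |M j k| * |y t k - y' t k|) := by
        calc |A| ≤ ∑ k, |M j k * (y t k - y' t k)| := Finset.abs_sum_le_sum_abs _ _
          _ = ∑ k, Real.sqrt |M j k| * (Real.sqrt |M j k| * |y t k - y' t k|) := by
            refine Finset.sum_congr rfl fun k _ => ?_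
            rw [abs_mul]
            nth_rewrite 1 [← Real.mul_self_sqrt (abs_nonneg (M j k))]
            ring
      calc A ^ 2 = |A| ^ 2 := (sq_abs A).symm
        _ ≤ (∑ k, Real.sqrt |M j k| * (Real.sqrt |M j k| * |y t k - y' t k|)) ^ 2 := by
            exact pow_le_pow_left₀ (abs_nonneg A) habs 2
        _ ≤ (∑ k, Real.sqrt |M j k| ^ 2)
              * (∑ k, (Real.sqrt |M j k| * |y t k - y' t k|) ^ 2) :=
            Finset.sum_mul_sq_le_sq_mul_sq _ _ _
        _ = S * Q := by
            congr 1
            · exact Finset.sum_congr rfl fun k _ => Real.sq_sqrt (abs_nonneg _)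
            · refine Finset.sum_congr rfl fun k _ => ?_
              rw [mul_pow, Real.sq_sqrt (abs_nonneg _), sq_abs]
    have hs : (0:ℝ) < c i * γM ^ 2 := mul_pos (hcpos i) (pow_pos hγM 2)
    have hyoung := young_aux A B (c i * γM ^ 2)
    have hA2' : A ^ 2 ≤ c i * Q := le_trans hA2 (mul_le_mul_of_nonneg_right hSc hQnn)
    have hfin : γM ^ 2 * (A + B) ^ 2
        ≤ (c i * γM ^ 2 + 1) * Q + γM ^ 2 * (c i * γM ^ 2 + 1) * B ^ 2 := by
      have h1 := mul_le_mul_of_nonneg_left hyoung (sq_nonneg γM)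
      have h2 := mul_le_mul_of_nonneg_left hA2'
        (le_of_lt (mul_pos (pow_pos hγM 2) (by nlinarith [hs] : (0:ℝ) < c i * γM ^ 2 + 1)))
      have h3 : (c i * γM ^ 2) * (γM ^ 2 * (A + B) ^ 2)
          ≤ (c i * γM ^ 2) * ((c i * γM ^ 2 + 1) * Q
              + γM ^ 2 * (c i * γM ^ 2 + 1) * B ^ 2) := by nlinarith [h1, h2]
      exact le_of_mul_le_mul_left h3 hs
    rw [div_mul_eq_mul_div, div_le_iff₀ (by nlinarith [hs] : (0:ℝ) < c i * γM ^ 2 + 1)]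
    linarith [hfin]
  -- sum the row bounds
  have hrows : (∑ j : Fin m, γM ^ 2 / (c (σin j) * γM ^ 2 + 1)
        * ((M *ᵥ y t + d t) j - (M *ᵥ y' t + d' t) j) ^ 2)
      ≤ (∑ j : Fin m, ∑ k, |M j k| * (y t k - y' t k) ^ 2)
        + γM ^ 2 * ∑ j, (d t j - d' t j) ^ 2 := by
    calc _ ≤ ∑ j : Fin m, ((∑ k, |M j k| * (y t k - y' t k) ^ 2)
          + γM ^ 2 * (d t j - d' t j) ^ 2) := Finset.sum_le_sum fun j _ => hrow j
      _ = _ := by rw [Finset.sum_add_distrib, Finset.mul_sum]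
  -- columnwise bound
  have hcol : (∑ j : Fin m, ∑ k, |M j k| * (y t k - y' t k) ^ 2)
      ≤ ∑ k : Fin p, r (σout k) * (y t k - y' t k) ^ 2 := by
    rw [Finset.sum_comm]
    refine Finset.sum_le_sum fun k _ => ?_
    rw [← Finset.sum_mul]
    exact mul_le_mul_of_nonneg_right ((hr (σout k)).2 ⟨k, rfl, rfl⟩) (sq_nonneg _)
  -- output weight lower bound
  have hout2 : (∑ k : Fin p, (y t k - y' t k) ^ 2)
        + (∑ k : Fin p, r (σout k) * (y t k - y' t k) ^ 2)
      ≤ ∑ k : Fin p, α (σout k) * (y t k - y' t k) ^ 2 := by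
    rw [← Finset.sum_add_distrib]
    refine Finset.sum_le_sum fun k _ => ?_
    rw [hα (σout k)]
    nlinarith [sq_nonneg (z (σout k)), sq_nonneg (y t k - y' t k)]
  linarith [hsum, hrows, hcol, hout2]
end
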